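/- For r ≥ 1, let S = C_{k_1;n_1} × ⋯ × C_{k_r;n_r} be a direct product of finite cyclic semigroups with k_1 ≤ k_2 ≤ ⋯ ≤ k_r, and let K be a field such that either (i) K is algebraically closed of characteristic zero, or (ii) K has characteristic p and n_1⋯n_r is a power of the prime p. Then d(S,K) = max( k_r − 1, d(ℤ_{n_1} ⊕ ⋯ ⊕ ℤ_{n_r}, K) ) ≥ max( k_r − 1, D(ℤ_{n_1} ⊕ ⋯ ⊕ ℤ_{n_r}) − 1 ), and the equality d(S,K) = max( k_r − 1, D(ℤ_{n_1} ⊕ ⋯ ⊕ ℤ_{n_r}) − 1 ) holds if r = 1 or K has characteristic p (case (ii)). -/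

import Mathlib

/-!
Let `E` be the unique idempotent of `S = ∏ C_{k_i;n_i}`, so that `e(s) = E` for all `s` and
`E + S` is a group isomorphic to `G = ⊕ ℤ_{n_i}`. As `X^E` is idempotent, a product of factors
`X^{s_j} - a_j X^E` splits as `X^E · P + (1 - X^E) · X^{s_1 + ⋯ + s_ℓ}`. The first summand is the
image of the corresponding product in `K[G]`; the second vanishes iff `s_1 + ⋯ + s_ℓ ∈ E + S`,
which always holds once `ℓ ≥ k_r` and fails for `x, …, x` of length `k_r - 1`. Hence
`d(S,K) = max(k_r - 1, d(G,K))`.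

In `K[G]`, a zero-sum free sequence gives a product in which `X^{s_1 + ⋯ + s_ℓ}` has coefficient
`1`, so `d(G,K) ≥ D(G) - 1`. Conversely, in characteristic `p` with `G` a `p`-group the
augmentation ideal is generated by the `X^{e_i} - 1`, and `(X^{e_i} - 1)^{n_i} = 0`, so any product
of more than `∑ (n_i - 1)` of its elements vanishes. If `K` has enough roots of unity, the `|G|`
characters of `G` separate the points of `K[G]`, and each can be chosen to kill its own factor,
so `d(G,K) ≤ |G| - 1`. Both bounds meet `D(G) ≥ 1 + ∑ (n_i - 1)`, witnessed by each `e_i`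
repeated `n_i - 1` times.
-/

namespace ZS

variable (S : Type*) [AddCommSemigroup S]

/-- `nsmul' n x = (n+1)·x`, iterated addition in a semigroup. -/
def nsmul' : ℕ → S → S
  | 0, x => x
  | n + 1, x => x + nsmul' n x

/-- The cyclic subsemigroup `⟨x⟩ = {x, 2x, 3x, …}` generated by `x`. -/
def cyc (x : S) : Set S := Set.range fun n => nsmul' S n x

/-- `x` is periodic if `⟨x⟩` is finite. -/
def IsPeriodicElem (x : S) : Prop := (cyc S x).Finite

/-- A semigroup is periodic if every element is periodic. -/
def IsPeriodicSemigroup : Prop := ∀ x : S, IsPeriodicElem S x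

/-- `ρ(x)`: the least `m ≥ 1` such that `m·x` is idempotent (equivalently `m·x = e(x)`). -/
noncomputable def rho (x : S) : ℕ :=
  sInf {n : ℕ | nsmul' S n x + nsmul' S n x = nsmul' S n x} + 1

/-- `e(x)`: the unique idempotent of the finite cyclic semigroup `⟨x⟩`. -/
noncomputable def eIdem (x : S) : S :=
  nsmul' S (sInf {n : ℕ | nsmul' S n x + nsmul' S n x = nsmul' S n x}) x

/-- The period of a (periodic) element `x`: the least `n > 0` with `(m+n)x = mx` for some `m`. -/
noncomputable def period (x : S) : ℕ :=
  sInf {n : ℕ | 0 < n ∧ ∃ m : ℕ, nsmul' S (m + n) x = nsmul' S m x}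

/-- The index of a (periodic) element `x`: the least `k ≥ 1` with `kx = tx` for some `t ≠ k`. -/
noncomputable def indexOf (x : S) : ℕ :=
  sInf {k : ℕ | ∃ t : ℕ, t ≠ k ∧ nsmul' S k x = nsmul' S t x} + 1

/-- `exp(S)`: the lcm of the periods of the elements of `S`, described as the least positive
common multiple of all the periods. -/
noncomputable def expS : ℕ := sInf {n : ℕ | 0 < n ∧ ∀ x : S, period S x ∣ n}

/-- `K` is a splitting field for exponent `n`: it contains exactly `n` `n`-th roots of unity. -/
def SplitField (K : Type*) [Field K] (n : ℕ) : Prop := Set.ncard {ζ : K | ζ ^ n = 1} = n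

/-- Green's preorder `a ≼_𝓗 b`. -/
def gLe (a b : S) : Prop := a = b ∨ ∃ c : S, a = b + c

/-- Green's congruence `a 𝓗 b`. -/
def gEq (a b : S) : Prop := gLe S a b ∧ gLe S b a

/-- `a ≺_𝓗 b`. -/
def gLt (a b : S) : Prop := gLe S a b ∧ ¬ gLe S b a

/-- The Green class `H_a`. -/
def HClass (a : S) : Set S := {x : S | gEq S x a}

/-- The stabilizer `St(H_a)` of the Green class of `a`. -/
def stab (a : S) : Set S := {c : S | ∀ x ∈ HClass S a, c + x ∈ HClass S a}

theorem gLe_trans {a b c : S} (h1 : gLe S a b) (h2 : gLe S b c) : gLe S a c := by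
  rcases h1 with rfl | ⟨u, rfl⟩
  · exact h2
  · rcases h2 with rfl | ⟨v, rfl⟩
    · exact Or.inr ⟨u, rfl⟩
    · exact Or.inr ⟨v + u, by rw [add_assoc]⟩

theorem gLe_add_right {a b : S} (x : S) (h : gLe S a b) : gLe S (a + x) (b + x) := by
  rcases h with rfl | ⟨c, rfl⟩
  · exact Or.inl rfl
  · exact Or.inr ⟨c, by rw [add_right_comm]⟩

theorem gEq_add {w x y z : S} (h1 : gEq S w x) (h2 : gEq S y z) : gEq S (w + y) (x + z) := by
  have k1 : gLe S (w + y) (x + y) := gLe_add_right S y h1.1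
  have k2 : gLe S (x + y) (x + z) := by
    have h := gLe_add_right S x h2.1
    rwa [add_comm z x, add_comm y x] at h
  have k3 : gLe S (x + z) (w + z) := gLe_add_right S z h1.2
  have k4 : gLe S (w + z) (w + y) := by
    have h := gLe_add_right S w h2.2
    rwa [add_comm z w, add_comm y w] at h
  exact ⟨gLe_trans S k1 k2, gLe_trans S k3 k4⟩

/-- Green's congruence as an additive congruence. -/
def greenCon : AddCon S where
  r a b := gEq S a b
  iseqv := ⟨fun _ => ⟨Or.inl rfl, Or.inl rfl⟩, fun h => ⟨h.2, h.1⟩,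
    fun h1 h2 => ⟨gLe_trans S h1.1 h2.1, gLe_trans S h2.2 h1.2⟩⟩
  add' h1 h2 := gEq_add S h1 h2

/-- The quotient semigroup `S/𝓗`. -/
abbrev GQuot := (greenCon S).Quotient

/-- The canonical epimorphism `S → S/𝓗`, `a ↦ ā`. -/
def gq (a : S) : GQuot S := (a : (greenCon S).Quotient)

/-- The sum of a sequence (multiset) of elements of `S`, computed in `WithZero S`
(the empty sequence having sum the adjoined zero). -/
def msum (T : Multiset S) : WithZero S := (T.map fun x => (x : WithZero S)).sum

/-- A sequence over a commutative semigroup is (additively) reducible if some proper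
(possibly empty) subsequence has the same sum; the empty sequence has sum the identity of `S`,
when `S` has one. -/
def IsReducible (T : Multiset S) : Prop :=
  (∃ T' : Multiset S, T' ≤ T ∧ T' ≠ T ∧ T' ≠ 0 ∧ msum S T' = msum S T) ∨
    (T ≠ 0 ∧ ∃ z : S, msum S T = ↑z ∧ ∀ s : S, z + s = s)

/-- The Davenport constant `D(S)` of a commutative semigroup. -/
noncomputable def Dav : ℕ∞ :=
  sInf {n : ℕ∞ | ∀ T : Multiset S, (T.card : ℕ∞) ≥ n → IsReducible S T}

/-- The relative Davenport constant `D_a(S)`: the largest length of an additively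
irreducible sequence with sum `a`. -/
noncomputable def Drel (a : S) : ℕ∞ :=
  sSup {n : ℕ∞ | ∃ T : Multiset S,
    T ≠ 0 ∧ ¬ IsReducible S T ∧ msum S T = ↑a ∧ n = (T.card : ℕ∞)}

/-- The Erdős–Burgess constant `I(S)`: the smallest `ℓ` such that every sequence over `S` of
length (at least) `ℓ` has a nonempty subsequence with idempotent sum. -/
noncomputable def EB : ℕ∞ :=
  sInf {n : ℕ∞ | ∀ T : Multiset S, (T.card : ℕ∞) ≥ n →
    ∃ T' : Multiset S, T' ≤ T ∧ T' ≠ 0 ∧ ∃ x : S, msum S T' = ↑x ∧ x + x = x}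

/-- The Davenport constant of a (semigroup which is a) group: the smallest `ℓ` such that every
sequence of length (at least) `ℓ` has a nonempty subsequence whose sum is the identity element. -/
noncomputable def DavGrpSet : ℕ∞ :=
  sInf {n : ℕ∞ | ∀ T : Multiset S, (T.card : ℕ∞) ≥ n →
    ∃ T' : Multiset S, T' ≤ T ∧ T' ≠ 0 ∧ ∃ z : S, msum S T' = ↑z ∧ ∀ x : S, z + x = x}

/-- The Davenport constant of a finite abelian group. -/
noncomputable def DavG (G : Type*) [AddCommMonoid G] : ℕ∞ :=
  sInf {n : ℕ∞ | ∀ T : Multiset G, (T.card : ℕ∞) ≥ n →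
    ∃ T' : Multiset G, T' ≤ T ∧ T' ≠ 0 ∧ T'.sum = 0}

/-- `ψ(a)`: the largest length of a strictly ascending chain of principal ideals starting at
`(a)`. -/
noncomputable def psi (a : S) : ℕ∞ :=
  sSup {n : ℕ∞ | ∃ ℓ : ℕ, n = (ℓ : ℕ∞) ∧
    ∃ c : ℕ → S, c 0 = a ∧ ∀ i < ℓ, gLt S (c i) (c (i + 1))}

/-- `Ψ(S)`: the largest length of a strictly ascending chain of principal ideals of `S`. -/
noncomputable def PsiS : ℕ∞ := ⨆ a : S, psi S a

/-- A subset of a semigroup which is a subgroup: closed under addition, with an identity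
and inverses. -/
def IsSubgroupSet (T : Set S) : Prop :=
  (∀ x ∈ T, ∀ y ∈ T, x + y ∈ T) ∧
    ∃ z ∈ T, (∀ x ∈ T, z + x = x) ∧ ∀ x ∈ T, ∃ y ∈ T, x + y = z

open Classical in
/-- `ε_a`: `0` if `⟨a⟩` is a group, `1` otherwise. -/
noncomputable def eps (a : S) : ℕ∞ := if IsSubgroupSet S (cyc S a) then 0 else 1

/-- The Schützenberger maps on the Green class `H_a`: maps `x ↦ c + x` for `c ∈ St(H_a)`. -/
def GammaSet (a : S) : Set (↥(HClass S a) → ↥(HClass S a)) :=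
  {f | ∃ c ∈ stab S a, ∀ x : ↥(HClass S a), (↑(f x) : S) = c + ↑x}

/-- The Schützenberger group `Γ(H_a)` (as a type; it is empty when `St(H_a) = ∅`). -/
def Gamma (a : S) : Type _ := ↥(GammaSet S a)

instance (a : S) : Add (Gamma S a) :=
  ⟨fun f g => ⟨f.1 ∘ g.1, by
    obtain ⟨c, hc, hfc⟩ := f.2
    obtain ⟨d, hd, hgd⟩ := g.2
    refine ⟨c + d, fun x hx => by rw [add_assoc]; exact hc _ (hd x hx), fun x => ?_⟩
    show (↑(f.1 (g.1 x)) : S) = c + d + ↑x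
    rw [hfc (g.1 x), hgd x, add_assoc]⟩⟩

instance (a : S) : AddCommSemigroup (Gamma S a) where
  add_assoc f g h := Subtype.ext rfl
  add_comm f g := by
    obtain ⟨c, hc, hfc⟩ := f.2
    obtain ⟨d, hd, hgd⟩ := g.2
    apply Subtype.ext
    funext x
    apply Subtype.ext
    show (↑(f.1 (g.1 x)) : S) = ↑(g.1 (f.1 x))
    rw [hfc (g.1 x), hgd x, hgd (f.1 x), hfc x, add_left_comm]

/-- `St(H_a)` as a subsemigroup of `S`. -/
def stabSub (a : S) : AddSubsemigroup S where
  carrier := stab S a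
  add_mem' := fun {c d} hc hd x hx => by rw [add_assoc]; exact hc _ (hd x hx)

/-- The canonical surjection `π_a : St(H_a) → Γ(H_a)`, `c ↦ γ_c`. -/
def gammaMap (a : S) (c : ↥(stabSub S a)) : Gamma S a :=
  ⟨fun x => ⟨(↑c : S) + ↑x, c.2 ↑x x.2⟩, ⟨↑c, c.2, fun _ => rfl⟩⟩

/-- The semigroup algebra `R[X;S]` of a commutative semigroup, realized inside the monoid
algebra of the monoid obtained from `S` by adjoining an identity element. -/
abbrev SAlg (R : Type*) [CommRing R] (S : Type*) [AddCommSemigroup S] :=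
  AddMonoidAlgebra R (WithZero S)

/-- The monomial `r·X^s` of the semigroup algebra. -/
noncomputable def Xm (R : Type*) [CommRing R] {S : Type*} [AddCommSemigroup S] (s : S) (r : R) :
    SAlg R S := AddMonoidAlgebra.single (↑s) r

/-- The factor `X^s - a·X^{e(s)}` of the semigroup algebra. -/
noncomputable def facX (R : Type*) [CommRing R] {S : Type*} [AddCommSemigroup S]
    (s : S) (a : R) : SAlg R S := Xm R s 1 - Xm R (eIdem S s) a

/-- The invariant `d(S,R)`: the supremum of all `ℓ` such that some sequence `s_1,…,s_ℓ` over
`S` satisfies `(X^{s_1} - a_1 X^{e(s_1)}) ⋯ (X^{s_ℓ} - a_ℓ X^{e(s_ℓ)}) ≠ 0` in `R[X;S]` for all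
nonzero `a_1, …, a_ℓ ∈ R`. -/
noncomputable def dd (R : Type*) [CommRing R] (S : Type*) [AddCommSemigroup S] : ℕ∞ :=
  sSup {n : ℕ∞ | ∃ ℓ : ℕ, n = (ℓ : ℕ∞) ∧ ∃ s : Fin ℓ → S,
    ∀ a : Fin ℓ → R, (∀ i, a i ≠ 0) → ∏ i, facX R (s i) (a i) ≠ 0}

/-- `Λ(S)`: the minimum over all generating sets `A` of `S` of `1 + Σ_{a∈A} (ρ(a)-1)`. -/
noncomputable def Lam (S : Type*) [AddCommSemigroup S] : ℕ :=
  sInf {n : ℕ | ∃ A : Finset S,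
    AddSubsemigroup.closure (↑A : Set S) = ⊤ ∧ n = 1 + ∑ a ∈ A, (rho S a - 1)}

/-- An elementary semigroup: an ideal extension of a nilsemigroup `N` by a group with zero
`G ∪ {∞}`. -/
def IsElementary : Prop :=
  ∃ G N : Set S, G ∪ N = Set.univ ∧ Disjoint G N ∧ IsSubgroupSet S G ∧
    (∀ x ∈ N, ∀ s : S, s + x ∈ N) ∧
    ∃ z ∈ N, (∀ s : S, s + z = z) ∧ ∀ x ∈ N, ∃ n : ℕ, nsmul' S n x = z

variable {S}

section Cyclic

variable {x : S}

theorem coe_nsmul' (x : S) (m : ℕ) :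
    ((nsmul' S m x : S) : WithZero S) = (m + 1) • (x : WithZero S) := by
  induction m with
  | zero => simp [nsmul']
  | succ m ih => rw [nsmul', WithZero.coe_add, ih, succ_nsmul' _ (m + 1)]

theorem nsmul'_add_nsmul' (x : S) (a b : ℕ) :
    nsmul' S a x + nsmul' S b x = nsmul' S (a + b + 1) x := by
  apply WithZero.coe_injective
  rw [WithZero.coe_add, coe_nsmul', coe_nsmul', coe_nsmul', ← add_nsmul]
  ring_nf

theorem nsmul'_add_eq_of_eq {a b : ℕ} (h : nsmul' S a x = nsmul' S b x) (c : ℕ) :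
    nsmul' S (a + c) x = nsmul' S (b + c) x := by
  rcases c with _ | c
  · exact h
  · rw [← add_assoc, ← add_assoc, ← nsmul'_add_nsmul', ← nsmul'_add_nsmul', h]

theorem nsmul'_add_mul_eq_of_add_eq {a d : ℕ} (h : nsmul' S (a + d) x = nsmul' S a x)
    {m : ℕ} (hm : a ≤ m) (j : ℕ) : nsmul' S (m + j * d) x = nsmul' S m x := by
  obtain ⟨c, rfl⟩ := Nat.exists_eq_add_of_le hm
  induction j with
  | zero => simp
  | succ j ih =>
    rw [← ih, show a + c + (j + 1) * d = a + d + (c + j * d) by ring, add_assoc a c]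
    exact nsmul'_add_eq_of_eq h _

theorem exists_nsmul'_eq_of_isPeriodicElem (hx : IsPeriodicElem S x) :
    ∃ a d, 0 < d ∧ nsmul' S (a + d) x = nsmul' S a x := by
  obtain ⟨a, b, hab, hne⟩ := Function.not_injective_iff.mp
    fun h => Set.infinite_range_of_injective h hx
  rcases Nat.lt_or_gt_of_ne hne with h | h
  · exact ⟨a, b - a, by omega, by rw [Nat.add_sub_cancel' h.le, hab]⟩
  · exact ⟨b, a - b, by omega, by rw [Nat.add_sub_cancel' h.le, hab]⟩

theorem exists_nsmul'_add_self (hx : IsPeriodicElem S x) :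
    ∃ m, nsmul' S m x + nsmul' S m x = nsmul' S m x := by
  obtain ⟨a, d, hd, h⟩ := exists_nsmul'_eq_of_isPeriodicElem hx
  obtain ⟨m, hm⟩ : ∃ m, (a + 1) * d = m + 1 := ⟨(a + 1) * d - 1, by
    have := Nat.le_mul_of_pos_right (a + 1) hd; omega⟩
  refine ⟨m, ?_⟩
  calc nsmul' S m x + nsmul' S m x = nsmul' S (m + (a + 1) * d) x := by
        rw [nsmul'_add_nsmul', hm, add_assoc]
    _ = nsmul' S m x := nsmul'_add_mul_eq_of_add_eq h (by nlinarith) _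

theorem eIdem_eq_of_forall_add_self_eq [Finite S] {e : S} (he : ∀ y : S, y + y = y → y = e)
    (s : S) : eIdem S s = e :=
  he _ (Nat.sInf_mem (exists_nsmul'_add_self (Set.toFinite _)))

end Cyclic

section IndexPeriod

variable {x : S}

theorem eq_of_nsmul'_eq_of_lt_indexOf {m t : ℕ} (hm : m + 1 < indexOf S x)
    (h : nsmul' S m x = nsmul' S t x) : t = m := by
  by_contra hne
  have : sInf {k : ℕ | ∃ t : ℕ, t ≠ k ∧ nsmul' S k x = nsmul' S t x} ≤ m :=
    Nat.sInf_le ⟨t, hne, h⟩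
  rw [indexOf] at hm
  omega

theorem exists_ne_nsmul'_eq_indexOf (hx : IsPeriodicElem S x) :
    ∃ t, t ≠ indexOf S x - 1 ∧ nsmul' S (indexOf S x - 1) x = nsmul' S t x := by
  obtain ⟨a, d, hd, h⟩ := exists_nsmul'_eq_of_isPeriodicElem hx
  simpa [indexOf] using Nat.sInf_mem
    (s := {k : ℕ | ∃ t : ℕ, t ≠ k ∧ nsmul' S k x = nsmul' S t x})
    ⟨a, a + d, by omega, h.symm⟩

theorem period_mem (hx : IsPeriodicElem S x) :
    0 < period S x ∧ ∃ m, nsmul' S (m + period S x) x = nsmul' S m x := by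
  obtain ⟨a, d, hd, h⟩ := exists_nsmul'_eq_of_isPeriodicElem hx
  exact Nat.sInf_mem
    (s := {n : ℕ | 0 < n ∧ ∃ m : ℕ, nsmul' S (m + n) x = nsmul' S m x}) ⟨d, hd, a, h⟩

theorem period_le {m d : ℕ} (hd : 0 < d) (h : nsmul' S (m + d) x = nsmul' S m x) :
    period S x ≤ d :=
  Nat.sInf_le ⟨hd, m, h⟩

theorem nsmul'_add_mul_period (hx : IsPeriodicElem S x) {m : ℕ} (hm : indexOf S x - 1 ≤ m)
    (j : ℕ) : nsmul' S (m + j * period S x) x = nsmul' S m x := by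
  obtain ⟨t, ht, hκt⟩ := exists_ne_nsmul'_eq_indexOf hx
  have hlt : indexOf S x - 1 < t := by
    by_contra hle
    exact ht (eq_of_nsmul'_eq_of_lt_indexOf (by omega) hκt.symm).symm
  -- `d` is a period from `indexOf S x - 1` on and `period S x` one from `m₀` on, so shift by
  -- `m₀ * d` to get past `m₀`
  set d := t - (indexOf S x - 1)
  have hcyc : nsmul' S (indexOf S x - 1 + d) x = nsmul' S (indexOf S x - 1) x := by
    rw [Nat.add_sub_cancel' hlt.le, hκt]
  obtain ⟨-, m₀, hm₀⟩ := period_mem hx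
  have hm₀d : m₀ ≤ m + m₀ * d := le_add_left (Nat.le_mul_of_pos_right _ (by omega))
  calc nsmul' S (m + j * period S x) x
      = nsmul' S (m + j * period S x + m₀ * d) x :=
        (nsmul'_add_mul_eq_of_add_eq hcyc (by omega) _).symm
    _ = nsmul' S (m + m₀ * d + j * period S x) x := by rw [add_right_comm]
    _ = nsmul' S (m + m₀ * d) x := nsmul'_add_mul_eq_of_add_eq hm₀ hm₀d _
    _ = nsmul' S m x := nsmul'_add_mul_eq_of_add_eq hcyc hm _

theorem period_dvd_of_nsmul'_eq (hx : IsPeriodicElem S x) {m m' : ℕ}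
    (hm : indexOf S x - 1 ≤ m) (hle : m ≤ m') (h : nsmul' S m x = nsmul' S m' x) :
    period S x ∣ m' - m := by
  obtain ⟨hν, -⟩ := period_mem hx
  set ν := period S x
  by_contra hndvd
  have hpos : 0 < (m' - m) % ν := Nat.pos_of_ne_zero fun h0 => hndvd (Nat.dvd_of_mod_eq_zero h0)
  refine absurd (period_le (m := m) hpos ?_) (not_le.mpr (Nat.mod_lt _ hν))
  have hdiv := Nat.mod_add_div (m' - m) ν
  calc nsmul' S (m + (m' - m) % ν) x
      = nsmul' S (m + (m' - m) % ν + (m' - m) / ν * ν) x :=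
        (nsmul'_add_mul_period hx (by omega) _).symm
    _ = nsmul' S m' x := by
        congr 1
        generalize (m' - m) / ν = q at hdiv
        rw [mul_comm] at hdiv
        omega
    _ = nsmul' S m x := h.symm

/-- `⟨x⟩` is a copy of `C_{κ;ν}`. As `nsmul' S m x = (m + 1) • x`, the cycle starts at
`nsmul' S (κ - 1) x`. -/
structure HasIndexPeriod (x : S) (κ ν : ℕ) : Prop where
  one_le_index : 1 ≤ κ
  one_le_period : 1 ≤ ν
  nsmul'_eq_nsmul'_iff {m m' : ℕ} :
    nsmul' S m x = nsmul' S m' x ↔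
      m = m' ∨ κ - 1 ≤ m ∧ κ - 1 ≤ m' ∧ (m : ZMod ν) = m'

theorem IsPeriodicElem.hasIndexPeriod (hx : IsPeriodicElem S x) :
    HasIndexPeriod x (indexOf S x) (period S x) where
  one_le_index := Nat.le_add_left 1 _
  one_le_period := (period_mem hx).1
  nsmul'_eq_nsmul'_iff {m m'} := by
    rw [ZMod.natCast_eq_natCast_iff]
    constructor
    · intro h
      wlog hle : m ≤ m' generalizing m m'
      · obtain rfl | ⟨h1, h2, h3⟩ := this h.symm (by omega)
        · exact Or.inl rfl
        · exact Or.inr ⟨h2, h1, h3.symm⟩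
      rcases hle.eq_or_lt with rfl | hlt
      · exact Or.inl rfl
      have hm : indexOf S x - 1 ≤ m := by
        by_contra hm
        exact hlt.ne (eq_of_nsmul'_eq_of_lt_indexOf (by omega) h).symm
      exact Or.inr ⟨hm, by omega,
        (Nat.modEq_iff_dvd' hle).mpr (period_dvd_of_nsmul'_eq hx hm hle h)⟩
    · rintro (rfl | ⟨hm, hm', hmod⟩)
      · rfl
      wlog hle : m ≤ m' generalizing m m'
      · exact (this hm' hm hmod.symm (by omega)).symm
      obtain ⟨j, hj⟩ := (Nat.modEq_iff_dvd' hle).mp hmod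
      rw [show m' = m + j * period S x by rw [mul_comm] at hj; omega]
      exact (nsmul'_add_mul_period hx hm j).symm

end IndexPeriod

section CyclicStructure

variable {x : S} {κ ν : ℕ}

def cycIdem (x : S) (κ ν : ℕ) : S := nsmul' S (κ * ν - 1) x

/-- The isomorphism of `ℤ_ν` onto the maximal subgroup of `C_{κ;ν}`. -/
def cycEmb (x : S) (κ ν : ℕ) (g : ZMod ν) : S := nsmul' S (κ * ν - 1 + g.val) x

theorem cycEmb_zero : cycEmb x κ ν 0 = cycIdem x κ ν := by
  simp [cycEmb, cycIdem]

namespace HasIndexPeriod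

theorem neZero (h : HasIndexPeriod x κ ν) : NeZero ν := ⟨by have := h.one_le_period; omega⟩

theorem index_sub_one_le (h : HasIndexPeriod x κ ν) : κ - 1 ≤ κ * ν - 1 :=
  Nat.sub_le_sub_right (Nat.le_mul_of_pos_right κ h.one_le_period) 1

theorem natCast_mul_sub_one (h : HasIndexPeriod x κ ν) :
    ((κ * ν - 1 : ℕ) : ZMod ν) = -1 := by
  rw [Nat.cast_sub (Nat.one_le_iff_ne_zero.mpr (Nat.mul_ne_zero (by have := h.one_le_index; omega)
    (by have := h.one_le_period; omega))), Nat.cast_mul, ZMod.natCast_self, mul_zero, Nat.cast_one,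
    zero_sub]

theorem nsmul'_eq (h : HasIndexPeriod x κ ν) {m m' : ℕ} (hm : κ - 1 ≤ m)
    (hm' : κ - 1 ≤ m') (hmod : (m : ZMod ν) = m') : nsmul' S m x = nsmul' S m' x :=
  h.nsmul'_eq_nsmul'_iff.mpr (Or.inr ⟨hm, hm', hmod⟩)

theorem nsmul'_add_self_iff (h : HasIndexPeriod x κ ν) (m : ℕ) :
    nsmul' S m x + nsmul' S m x = nsmul' S m x ↔ κ - 1 ≤ m ∧ (m : ZMod ν) + 1 = 0 := by
  rw [nsmul'_add_nsmul', h.nsmul'_eq_nsmul'_iff]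
  push_cast
  constructor
  · rintro (h' | ⟨-, hm, hmod⟩)
    · omega
    · exact ⟨hm, by linear_combination hmod⟩
  · rintro ⟨hm, hmod⟩
    exact Or.inr ⟨by omega, hm, by linear_combination hmod⟩

theorem cycIdem_add_self (h : HasIndexPeriod x κ ν) :
    cycIdem x κ ν + cycIdem x κ ν = cycIdem x κ ν :=
  (h.nsmul'_add_self_iff _).mpr ⟨h.index_sub_one_le, by rw [h.natCast_mul_sub_one]; ring⟩

theorem eq_cycIdem_of_add_self (h : HasIndexPeriod x κ ν) (hgen : cyc S x = Set.univ) {y : S}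
    (hy : y + y = y) : y = cycIdem x κ ν := by
  obtain ⟨m, rfl⟩ : y ∈ cyc S x := hgen ▸ Set.mem_univ y
  obtain ⟨hm, hmod⟩ := (h.nsmul'_add_self_iff m).mp hy
  exact h.nsmul'_eq hm h.index_sub_one_le
    (by rw [h.natCast_mul_sub_one]; linear_combination hmod)

theorem coe_cycIdem_add_nsmul_eq_iff (h : HasIndexPeriod x κ ν) (M : ℕ) :
    ((cycIdem x κ ν : S) : WithZero S) + M • (x : WithZero S) = M • (x : WithZero S) ↔
      κ ≤ M := by
  rcases M with _ | m
  · simpa [Nat.one_le_iff_ne_zero] using h.one_le_index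
  · rw [← coe_nsmul', ← WithZero.coe_add, WithZero.coe_inj, cycIdem, nsmul'_add_nsmul',
      h.nsmul'_eq_nsmul'_iff]
    push_cast
    rw [h.natCast_mul_sub_one]
    have := h.index_sub_one_le
    constructor
    · rintro (h' | ⟨-, hm, -⟩) <;> omega
    · exact fun hm => Or.inr ⟨by omega, by omega, by ring⟩

theorem cycEmb_add (h : HasIndexPeriod x κ ν) (g g' : ZMod ν) :
    cycEmb x κ ν (g + g') = cycEmb x κ ν g + cycEmb x κ ν g' := by
  have := h.neZero
  rw [cycEmb, cycEmb, cycEmb, nsmul'_add_nsmul']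
  have := h.index_sub_one_le
  apply h.nsmul'_eq (by omega) (by omega)
  push_cast [ZMod.natCast_zmod_val, h.natCast_mul_sub_one]
  ring

theorem cycEmb_injective (h : HasIndexPeriod x κ ν) : Function.Injective (cycEmb x κ ν) := by
  have := h.neZero
  intro g g' hg
  rcases h.nsmul'_eq_nsmul'_iff.mp hg with heq | ⟨-, -, hmod⟩
  · exact ZMod.val_injective _ (by omega)
  · push_cast [ZMod.natCast_zmod_val] at hmod
    exact add_left_cancel hmod

theorem exists_cycEmb_eq_cycIdem_add (h : HasIndexPeriod x κ ν) (hgen : cyc S x = Set.univ)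
    (y : S) : ∃ g, cycEmb x κ ν g = cycIdem x κ ν + y := by
  have := h.neZero
  obtain ⟨m, rfl⟩ : y ∈ cyc S x := hgen ▸ Set.mem_univ y
  refine ⟨(m + 1 : ℕ), ?_⟩
  rw [cycEmb, cycIdem, nsmul'_add_nsmul']
  have := h.index_sub_one_le
  apply h.nsmul'_eq (by omega) (by omega)
  push_cast [ZMod.natCast_zmod_val, h.natCast_mul_sub_one]
  ring

end HasIndexPeriod

end CyclicStructure

theorem exists_sum_coe_eq {T : Type*} [AddCommSemigroup T] {ℓ : ℕ} (s : Fin (ℓ + 1) → T) :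
    ∃ σ : T, ∑ j, (s j : WithZero T) = σ := by
  induction ℓ with
  | zero => exact ⟨s 0, by simp⟩
  | succ ℓ ih =>
    obtain ⟨σ, hσ⟩ := ih (Fin.tail s)
    exact ⟨s 0 + σ, by rw [Fin.sum_univ_succ, WithZero.coe_add, ← hσ]; rfl⟩

theorem exists_sum_coe_eq_nsmul {x : S} (hgen : cyc S x = Set.univ) {ℓ : ℕ}
    (s : Fin ℓ → S) :
    ∃ M, ℓ ≤ M ∧ ∑ j, (s j : WithZero S) = M • (x : WithZero S) := by
  choose m hm using fun j => (hgen ▸ Set.mem_univ (s j) : s j ∈ cyc S x)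
  refine ⟨∑ j, (m j + 1), ?_, ?_⟩
  · simpa using Finset.card_nsmul_le_sum Finset.univ (fun j => m j + 1) 1 (by simp)
  · simp_rw [← hm, coe_nsmul', Finset.sum_smul]

section Product

variable {ι : Type*} {S : ι → Type*} [∀ i, AddCommSemigroup (S i)] {x : ∀ i, S i}
  {k n : ι → ℕ}

def piIdem (x : ∀ i, S i) (k n : ι → ℕ) : ∀ i, S i := fun i => cycIdem (x i) (k i) (n i)

theorem eIdem_pi [Finite ι] [∀ i, Finite (S i)] (h : ∀ i, HasIndexPeriod (x i) (k i) (n i))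
    (hgen : ∀ i, cyc (S i) (x i) = Set.univ) (s : ∀ i, S i) :
    eIdem (∀ i, S i) s = piIdem x k n :=
  eIdem_eq_of_forall_add_self_eq
    (fun _ hy => funext fun i => (h i).eq_cycIdem_of_add_self (hgen i) (congrFun hy i)) s

theorem piIdem_add_self (h : ∀ i, HasIndexPeriod (x i) (k i) (n i)) :
    piIdem x k n + piIdem x k n = piIdem x k n :=
  funext fun i => (h i).cycIdem_add_self

def piEmb (h : ∀ i, HasIndexPeriod (x i) (k i) (n i)) :
    (∀ i, ZMod (n i)) →ₙ+ ∀ i, S i where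
  toFun g i := cycEmb (x i) (k i) (n i) (g i)
  map_add' g g' := funext fun i => (h i).cycEmb_add (g i) (g' i)

theorem piEmb_zero (h : ∀ i, HasIndexPeriod (x i) (k i) (n i)) : piEmb h 0 = piIdem x k n :=
  funext fun _ => cycEmb_zero

theorem piEmb_injective (h : ∀ i, HasIndexPeriod (x i) (k i) (n i)) :
    Function.Injective (piEmb h) :=
  fun _ _ hg => funext fun i => (h i).cycEmb_injective (congrFun hg i)

theorem exists_piEmb_eq_piIdem_add (h : ∀ i, HasIndexPeriod (x i) (k i) (n i))
    (hgen : ∀ i, cyc (S i) (x i) = Set.univ) (s : ∀ i, S i) :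
    ∃ g, piEmb h g = piIdem x k n + s := by
  choose g hg using fun i => (h i).exists_cycEmb_eq_cycIdem_add (hgen i) (s i)
  exact ⟨g, funext hg⟩

theorem coe_piIdem_add_sum_coe (h : ∀ i, HasIndexPeriod (x i) (k i) (n i))
    (hgen : ∀ i, cyc (S i) (x i) = Set.univ) {ℓ : ℕ} (hℓ : ∀ i, k i ≤ ℓ + 1)
    (s : Fin (ℓ + 1) → ∀ i, S i) :
    ((piIdem x k n : ∀ i, S i) : WithZero (∀ i, S i)) + ∑ j, (s j : WithZero (∀ i, S i)) =
      ∑ j, (s j : WithZero (∀ i, S i)) := by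
  obtain ⟨σ, hσ⟩ := exists_sum_coe_eq s
  rw [hσ, ← WithZero.coe_add, WithZero.coe_inj]
  funext i
  obtain ⟨M, hM, hsum⟩ := exists_sum_coe_eq_nsmul (hgen i) fun j => s j i
  have hσi := congrArg (WithZero.mapAddHom (Pi.evalAddHom S i)) hσ
  simp only [map_sum, WithZero.mapAddHom_coe, Pi.evalAddHom_apply, hsum] at hσi
  apply WithZero.coe_injective
  rw [Pi.add_apply, WithZero.coe_add, ← hσi]
  exact ((h i).coe_cycIdem_add_nsmul_eq_iff M).mpr ((hℓ i).trans hM)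

theorem coe_piIdem_add_nsmul_ne (h : ∀ i, HasIndexPeriod (x i) (k i) (n i)) {i₀ : ι}
    {ℓ : ℕ} (hℓ : ℓ < k i₀) :
    ((piIdem x k n : ∀ i, S i) : WithZero (∀ i, S i)) + ℓ • (x : WithZero (∀ i, S i)) ≠
      ℓ • (x : WithZero (∀ i, S i)) := by
  intro heq
  have := congrArg (WithZero.mapAddHom (Pi.evalAddHom S i₀)) heq
  simp only [map_add, map_nsmul, WithZero.mapAddHom_coe, Pi.evalAddHom_apply] at this
  exact absurd (((h i₀).coe_cycIdem_add_nsmul_eq_iff ℓ).mp this) (not_le.mpr hℓ)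

noncomputable def piEmbAlg (K : Type*) [Field K] (h : ∀ i, HasIndexPeriod (x i) (k i) (n i)) :
    SAlg K (∀ i, ZMod (n i)) →+* SAlg K (∀ i, S i) :=
  AddMonoidAlgebra.mapDomainRingHom K (WithZero.mapAddHom (piEmb h))

theorem piEmbAlg_Xm {K : Type*} [Field K] (h : ∀ i, HasIndexPeriod (x i) (k i) (n i))
    (g : ∀ i, ZMod (n i)) (c : K) :
    piEmbAlg K h (Xm K g c) = Xm K (piEmb h g) c := by
  simp [piEmbAlg, Xm]

end Product

theorem _root_.IsIdempotentElem.prod_mul_add_one_sub_mul {A ι : Type*} [CommRing A] {e : A}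
    (he : IsIdempotentElem e) (t : Finset ι) (f g : ι → A) :
    ∏ j ∈ t, (e * f j + (1 - e) * g j) = e * ∏ j ∈ t, f j + (1 - e) * ∏ j ∈ t, g j := by
  classical
  induction t using Finset.induction_on with
  | empty => simp
  | insert a t ha ih =>
    simp only [Finset.prod_insert ha, ih]
    linear_combination (f a * ∏ j ∈ t, f j - f a * ∏ j ∈ t, g j - g a * ∏ j ∈ t, f j +
      g a * ∏ j ∈ t, g j) * he.eq

section SemigroupAlgebra

open AddMonoidAlgebra

variable {R : Type*} [CommRing R] {T : Type*} [AddCommSemigroup T]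

theorem Xm_mul_Xm (s t : T) (c d : R) : Xm R s c * Xm R t d = Xm R (s + t) (c * d) := by
  rw [Xm, Xm, Xm, single_mul_single, WithZero.coe_add]

theorem isIdempotentElem_Xm {e : T} (he : e + e = e) : IsIdempotentElem (Xm R e 1) := by
  rw [IsIdempotentElem, Xm_mul_Xm, he, mul_one]

theorem one_sub_Xm_mul_single (e : T) (w : WithZero T) :
    (1 - Xm R e 1) * single w 1 = single w 1 - single (↑e + w) 1 := by
  rw [sub_mul, one_mul, Xm, single_mul_single, mul_one]

theorem prod_facX_eq {e : T} (he : e + e = e) {ℓ : ℕ} (s : Fin ℓ → T)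
    (hs : ∀ j, eIdem T (s j) = e) (a : Fin ℓ → R) :
    ∏ j, facX R (s j) (a j) = Xm R e 1 * ∏ j, facX R (s j) (a j) +
      (1 - Xm R e 1) * single (∑ j, (s j : WithZero T)) 1 := by
  have hsplit : ∀ j, facX R (s j) (a j) =
      Xm R e 1 * facX R (s j) (a j) + (1 - Xm R e 1) * Xm R (s j) 1 := by
    intro j
    simp only [facX, hs, mul_sub, sub_mul, one_mul, Xm_mul_Xm, he, mul_one]
    abel
  conv_lhs => rw [Finset.prod_congr rfl fun j _ => hsplit j]
  rw [(isIdempotentElem_Xm he).prod_mul_add_one_sub_mul]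
  simp only [Xm, prod_single, Finset.prod_const_one]

end SemigroupAlgebra

def IsNonvanishingSeq (R : Type*) [CommRing R] {T : Type*} [AddCommSemigroup T] {ℓ : ℕ}
    (s : Fin ℓ → T) : Prop :=
  ∀ a : Fin ℓ → R, (∀ i, a i ≠ 0) → ∏ i, facX R (s i) (a i) ≠ 0

section DavenportInvariant

variable {R : Type*} [CommRing R] {T : Type*} [AddCommSemigroup T]

theorem le_dd {ℓ : ℕ} {s : Fin ℓ → T} (hs : IsNonvanishingSeq R s) :
    (ℓ : ℕ∞) ≤ dd R T :=
  le_sSup ⟨ℓ, rfl, s, hs⟩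

theorem dd_le {N : ℕ∞}
    (h : ∀ (ℓ : ℕ) (s : Fin ℓ → T), IsNonvanishingSeq R s → (ℓ : ℕ∞) ≤ N) :
    dd R T ≤ N :=
  sSup_le fun _ ⟨ℓ, hℓ, s, hs⟩ => hℓ ▸ h ℓ s hs

end DavenportInvariant

theorem eIdem_eq_zero {G : Type*} [AddCommGroup G] [Finite G] (g : G) : eIdem G g = 0 :=
  eIdem_eq_of_forall_add_self_eq (fun _ hy => add_eq_left.mp hy) g

section Reduction

open AddMonoidAlgebra

variable {ι : Type*} [Finite ι] {S : ι → Type*} [∀ i, AddCommSemigroup (S i)]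
  [∀ i, Finite (S i)] {x : ∀ i, S i} {k n : ι → ℕ} {K : Type*} [Field K]

theorem piEmbAlg_facX (h : ∀ i, HasIndexPeriod (x i) (k i) (n i))
    (hgen : ∀ i, cyc (S i) (x i) = Set.univ) (g : ∀ i, ZMod (n i)) (a : K) :
    piEmbAlg K h (facX K g a) = facX K (piEmb h g) a := by
  have := fun i => (h i).neZero
  rw [facX, facX, map_sub, eIdem_eq_zero, eIdem_pi h hgen, ← piEmb_zero h, piEmbAlg_Xm,
    piEmbAlg_Xm]

theorem piEmbAlg_facX_of_eq (h : ∀ i, HasIndexPeriod (x i) (k i) (n i))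
    (hgen : ∀ i, cyc (S i) (x i) = Set.univ) {g : ∀ i, ZMod (n i)} {s : ∀ i, S i}
    (hg : piEmb h g = piIdem x k n + s) (a : K) :
    piEmbAlg K h (facX K g a) = Xm K (piIdem x k n) 1 * facX K s a := by
  rw [piEmbAlg_facX h hgen, facX, facX, eIdem_pi h hgen, eIdem_pi h hgen, hg, mul_sub,
    Xm_mul_Xm, Xm_mul_Xm, piIdem_add_self h, one_mul, one_mul]

theorem IsNonvanishingSeq.map_piEmb (h : ∀ i, HasIndexPeriod (x i) (k i) (n i))
    (hgen : ∀ i, cyc (S i) (x i) = Set.univ) {ℓ : ℕ} {w : Fin ℓ → ∀ i, ZMod (n i)}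
    (hw : IsNonvanishingSeq K w) : IsNonvanishingSeq K (piEmb h ∘ w) := by
  have := fun i => (h i).neZero
  intro a ha hP
  refine hw a ha (mapDomain_injective (WithZero.mapAddHom_injective (piEmb_injective h)) ?_)
  change piEmbAlg K h _ = piEmbAlg K h 0
  rw [map_zero, map_prod, ← hP]
  exact Finset.prod_congr rfl fun j _ => piEmbAlg_facX h hgen _ _

theorem IsNonvanishingSeq.of_piEmb (h : ∀ i, HasIndexPeriod (x i) (k i) (n i))
    (hgen : ∀ i, cyc (S i) (x i) = Set.univ) {ℓ : ℕ} (hℓ : ∀ i, k i ≤ ℓ + 1)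
    {s : Fin (ℓ + 1) → ∀ i, S i} (hs : IsNonvanishingSeq K s)
    {w : Fin (ℓ + 1) → ∀ i, ZMod (n i)} (hw : ∀ j, piEmb h (w j) = piIdem x k n + s j) :
    IsNonvanishingSeq K w := by
  intro a ha hP
  apply hs a ha
  have hsplit := prod_facX_eq (piIdem_add_self h) s (fun j => eIdem_pi h hgen (s j)) a
  rw [one_sub_Xm_mul_single, coe_piIdem_add_sum_coe h hgen hℓ, sub_self, add_zero] at hsplit
  have hpow : ∏ _j : Fin (ℓ + 1), Xm K (piIdem x k n) 1 = Xm K (piIdem x k n) 1 := by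
    rw [Finset.prod_const, Finset.card_univ, Fintype.card_fin,
      (isIdempotentElem_Xm (piIdem_add_self h)).pow_succ_eq ℓ]
  rw [hsplit, ← hpow, ← Finset.prod_mul_distrib]
  simp_rw [← piEmbAlg_facX_of_eq h hgen (hw _)]
  rw [← map_prod, hP, map_zero]

theorem isNonvanishingSeq_const (h : ∀ i, HasIndexPeriod (x i) (k i) (n i))
    (hgen : ∀ i, cyc (S i) (x i) = Set.univ) {i₀ : ι} {ℓ : ℕ} (hℓ : ℓ < k i₀) :
    IsNonvanishingSeq K fun _ : Fin ℓ => x := by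
  intro a _ hP
  have hsplit := prod_facX_eq (piIdem_add_self h) _ (fun _ => eIdem_pi h hgen x) a
  rw [hP, mul_zero, zero_add, one_sub_Xm_mul_single, eq_comm, sub_eq_zero] at hsplit
  have hσ := single_left_injective one_ne_zero hsplit
  simp only [Finset.sum_const, Finset.card_univ, Fintype.card_fin] at hσ
  exact coe_piIdem_add_nsmul_ne h hℓ hσ.symm

theorem dd_pi_eq_max (h : ∀ i, HasIndexPeriod (x i) (k i) (n i))
    (hgen : ∀ i, cyc (S i) (x i) = Set.univ) {i₀ : ι} (hmax : ∀ i, k i ≤ k i₀) :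
    dd K (∀ i, S i) = max ((k i₀ : ℕ∞) - 1) (dd K (∀ i, ZMod (n i))) := by
  have hk₀ := (h i₀).one_le_index
  apply le_antisymm
  · refine dd_le fun ℓ s hs => ?_
    rcases lt_or_ge ℓ (k i₀) with hlt | hge
    · refine le_max_of_le_left ?_
      rw [← Nat.cast_one, ← ENat.natCast_sub]
      exact_mod_cast (by omega : ℓ ≤ k i₀ - 1)
    · obtain ⟨ℓ, rfl⟩ : ∃ ℓ', ℓ = ℓ' + 1 := ⟨ℓ - 1, by omega⟩
      choose w hw using fun j => exists_piEmb_eq_piIdem_add h hgen (s j)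
      exact le_max_of_le_right (le_dd (hs.of_piEmb h hgen (fun i => (hmax i).trans hge) hw))
  · refine max_le ?_ (dd_le fun ℓ w hw => le_dd (hw.map_piEmb h hgen))
    have := le_dd (R := K)
      (isNonvanishingSeq_const h hgen (i₀ := i₀) (ℓ := k i₀ - 1) (by omega))
    rwa [ENat.natCast_sub, Nat.cast_one] at this

end Reduction

section GroupAlgebra

open AddMonoidAlgebra

variable {K : Type*} [Field K] {G : Type*} [AddCommGroup G]

noncomputable def collapseZero (K : Type*) [Field K] (G : Type*) [AddCommGroup G] :
    SAlg K G →+* AddMonoidAlgebra K G :=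
  mapDomainRingHom K (WithZero.lift (AddHom.id G))

theorem Xm_zero_mul (f : SAlg K G) :
    Xm K (0 : G) 1 * f =
      mapDomainNonUnitalRingHom K WithZero.coeAddHom (collapseZero K G f) := by
  suffices AddMonoidHom.mulLeft (Xm K (0 : G) 1) =
      (mapDomainNonUnitalRingHom K WithZero.coeAddHom).toAddMonoidHom.comp
        (collapseZero K G).toAddMonoidHom from DFunLike.congr_fun this f
  refine addHom_ext' fun w => AddMonoidHom.ext fun c => ?_
  cases w <;> simp [Xm, collapseZero, single_mul_single, ← WithZero.coe_add]

theorem prod_facX_eq_zero_iff [Finite G] {ℓ : ℕ} (s : Fin ℓ → G) (a : Fin ℓ → K) :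
    ∏ j, facX K (s j) (a j) = 0 ↔
      ∏ j, (single (s j) 1 - single 0 (a j) : AddMonoidAlgebra K G) = 0 := by
  have hcollapse : ∀ j, collapseZero K G (facX K (s j) (a j)) = single (s j) 1 - single 0 (a j) :=
    fun j => by rw [facX, map_sub, eIdem_eq_zero]; simp [collapseZero, Xm]
  rw [← Finset.prod_congr rfl fun j _ => hcollapse j, ← map_prod]
  refine ⟨fun hP => by rw [hP, map_zero], fun hQ => ?_⟩
  rcases ℓ with _ | ℓ
  · simp at hQ
  -- the group part `X^0 · P` of `P` is all of `P`, and it is recovered from its collapse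
  have hP : ∏ j, facX K (s j) (a j) = Xm K (0 : G) 1 * ∏ j, facX K (s j) (a j) := by
    rw [Fin.prod_univ_succ, ← mul_assoc, facX, eIdem_eq_zero, mul_sub, Xm_mul_Xm, Xm_mul_Xm,
      zero_add, zero_add, one_mul, one_mul]
  rw [hP, Xm_zero_mul, hQ, map_zero]

theorem isNonvanishingSeq_iff [Finite G] {ℓ : ℕ} (s : Fin ℓ → G) :
    IsNonvanishingSeq K s ↔ ∀ a : Fin ℓ → K, (∀ i, a i ≠ 0) →
      ∏ j, (single (s j) 1 - single 0 (a j) : AddMonoidAlgebra K G) ≠ 0 := by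
  simp only [IsNonvanishingSeq, ne_eq, prod_facX_eq_zero_iff]

end GroupAlgebra

def ZeroSumFree {ι G : Type*} [AddCommMonoid G] (w : ι → G) : Prop :=
  ∀ t : Finset ι, t.Nonempty → ∑ j ∈ t, w j ≠ 0

section ZeroSumFree

open AddMonoidAlgebra

variable {G : Type*} [AddCommMonoid G]

theorem ZeroSumFree.comp {ι κ : Type*} {w : ι → G} (hw : ZeroSumFree w) {f : κ → ι}
    (hf : Function.Injective f) : ZeroSumFree (w ∘ f) := fun t ht => by
  simpa [Finset.sum_map] using hw (t.map ⟨f, hf⟩) (ht.map)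

/-- The coefficient of `X^{w_1 + ⋯ + w_ℓ}` in the product is `1`. -/
theorem ZeroSumFree.prod_single_sub_ne_zero {R : Type*} [CommRing R] [Nontrivial R]
    [IsCancelAdd G] {ι : Type*} [Fintype ι] {w : ι → G} (hw : ZeroSumFree w) (a : ι → R) :
    ∏ j, (single (w j) 1 - single 0 (a j) : AddMonoidAlgebra R G) ≠ 0 := by
  classical
  have hsub : ∀ j, (single (w j) 1 - single 0 (a j) : AddMonoidAlgebra R G) =
      single (w j) 1 + single 0 (-a j) := fun j => by rw [single_neg, sub_eq_add_neg]
  have hcoeff : ∀ t ∈ (Finset.univ : Finset ι).powerset,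
      ((∏ j ∈ t, single (w j) (1 : R)) * ∏ j ∈ Finset.univ \ t, single 0 (-a j)).coeff
        (∑ j, w j) = if t = Finset.univ then 1 else 0 := by
    intro t _
    rw [prod_single, prod_single, single_mul_single, Finset.sum_const_zero, add_zero,
      Finset.prod_const_one, one_mul, coeff_single, Finsupp.single_apply]
    by_cases ht : t = Finset.univ
    · simp [ht]
    · rw [if_neg ht, if_neg]
      intro heq
      refine hw (Finset.univ \ t)
        (Finset.sdiff_nonempty.mpr fun h => ht (Finset.univ_subset_iff.mp h)) ?_
      exact add_eq_right.mp ((Finset.sum_sdiff (Finset.subset_univ t)).trans heq.symm)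
  intro h0
  have := congrArg (fun f => f.coeff (∑ j, w j)) h0
  simp only [hsub, Finset.prod_add, coeff_sum, Finsupp.finsetSum_apply, coeff_zero,
    Finsupp.coe_zero, Pi.zero_apply] at this
  rw [Finset.sum_congr rfl hcoeff, Finset.sum_ite_eq' _ _ (fun _ => (1 : R)),
    if_pos (Finset.mem_powerset_self _)] at this
  exact one_ne_zero this

theorem zeroSumFree_toList_get {T : Multiset G} (hT : ∀ T' ≤ T, T' ≠ 0 → T'.sum ≠ 0) :
    ZeroSumFree T.toList.get := by
  intro t ht
  rw [Finset.sum_eq_multiset_sum]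
  refine hT _ ?_ (by rw [Ne, Multiset.map_eq_zero, Finset.val_eq_zero]; exact ht.ne_empty)
  calc t.val.map T.toList.get ≤ Finset.univ.val.map T.toList.get :=
        Multiset.map_le_map (Finset.val_le_iff.mpr (Finset.subset_univ t))
    _ = T := by rw [Fin.univ_val_map, List.ofFn_get, Multiset.coe_toList]

theorem exists_zeroSumFree_of_lt_davG {m : ℕ} (h : (m : ℕ∞) < DavG G) :
    ∃ w : Fin m → G, ZeroSumFree w := by
  obtain ⟨T, hm, hT⟩ : ∃ T : Multiset G, m ≤ Multiset.card T ∧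
      ∀ T' ≤ T, T' ≠ 0 → T'.sum ≠ 0 := by
    by_contra! hc
    exact not_le.mpr h (sInf_le fun T hT => by
      obtain ⟨T', hle, hne, hsum⟩ := hc T (by exact_mod_cast hT)
      exact ⟨T', hle, hne, hsum⟩)
  have hlen : m ≤ T.toList.length := by rwa [Multiset.length_toList]
  exact ⟨_, (zeroSumFree_toList_get hT).comp (Fin.castLE_injective hlen)⟩

theorem _root_.Multiset.exists_le_map_eq {α β : Type*} {f : α → β} {s : Multiset α}
    {t : Multiset β} (h : t ≤ s.map f) : ∃ u ≤ s, u.map f = t := by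
  classical
  induction s using Multiset.induction_on generalizing t with
  | empty => exact ⟨0, le_rfl, (Multiset.le_zero.mp (by simpa using h)).symm⟩
  | cons a s ih =>
    rw [Multiset.map_cons] at h
    by_cases ha : f a ∈ t
    · rw [← Multiset.cons_erase ha, Multiset.cons_le_cons_iff] at h
      obtain ⟨u, hu, hmap⟩ := ih h
      exact ⟨a ::ₘ u, (Multiset.cons_le_cons_iff a).mpr hu, by
        rw [Multiset.map_cons, hmap, Multiset.cons_erase ha]⟩
    · obtain ⟨u, hu, hmap⟩ := ih ((Multiset.le_cons_of_notMem ha).mp h)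
      exact ⟨u, hu.trans (Multiset.le_cons_self s a), hmap⟩

theorem le_davG_of_zeroSumFree {ι : Type*} [Fintype ι] {w : ι → G} (hw : ZeroSumFree w) :
    ((Fintype.card ι + 1 : ℕ) : ℕ∞) ≤ DavG G := by
  classical
  refine le_sInf fun b hb => not_lt.mp fun hlt => ?_
  obtain ⟨T', hle, hne, hsum⟩ := hb (Finset.univ.val.map w) (by
    rw [Multiset.card_map, Finset.card_val, Finset.card_univ]
    exact Order.le_of_lt_add_one (by exact_mod_cast hlt))
  obtain ⟨u, hu, rfl⟩ := Multiset.exists_le_map_eq hle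
  have hnodup : u.Nodup := Multiset.nodup_of_le hu Finset.univ.nodup
  refine hw u.toFinset (by simpa [Multiset.toFinset_eq_empty] using hne.symm) ?_
  rwa [Finset.sum_eq_multiset_sum, Multiset.toFinset_val, hnodup.dedup]

end ZeroSumFree

section Davenport

variable {ι : Type*} [DecidableEq ι]

theorem zeroSumFree_single (n : ι → ℕ) :
    ZeroSumFree fun p : (Σ i, Fin (n i - 1)) => (Pi.single p.1 1 : ∀ i, ZMod (n i)) := by
  rintro t ⟨⟨i₀, j₀⟩, hj₀⟩ hsum
  set c := (t.filter fun p => p.1 = i₀).card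
  have hc_pos : 0 < c :=
    Finset.card_pos.mpr ⟨⟨i₀, j₀⟩, Finset.mem_filter.mpr ⟨hj₀, rfl⟩⟩
  have hc_le : c ≤ n i₀ - 1 := by
    calc c ≤ (Finset.univ.map
          (Function.Embedding.sigmaMk (β := fun i => Fin (n i - 1)) i₀)).card :=
          Finset.card_le_card fun p hp => by
            obtain ⟨i, j⟩ := p
            obtain ⟨-, rfl : i = i₀⟩ := Finset.mem_filter.mp hp
            simp
      _ = n i₀ - 1 := by simp
  have hcoord : ((c : ℕ) : ZMod (n i₀)) = 0 := by
    calc ((c : ℕ) : ZMod (n i₀)) = ∑ p ∈ t, if p.1 = i₀ then 1 else 0 :=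
          (Finset.sum_boole _ _).symm
      _ = (∑ p ∈ t, (Pi.single p.1 1 : ∀ i, ZMod (n i))) i₀ := by
          rw [Finset.sum_apply]
          refine Finset.sum_congr rfl fun ⟨i, j⟩ _ => ?_
          by_cases hi : i = i₀
          · subst hi; simp
          · simp [hi]
      _ = 0 := congrFun hsum i₀
  rw [ZMod.natCast_eq_zero_iff] at hcoord
  exact absurd (Nat.le_of_dvd hc_pos hcoord) (by omega)

theorem sum_sub_one_add_one_le_davG [Fintype ι] (n : ι → ℕ) :
    ((∑ i, (n i - 1) + 1 : ℕ) : ℕ∞) ≤ DavG (∀ i, ZMod (n i)) := by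
  simpa using le_davG_of_zeroSumFree (zeroSumFree_single n)

end Davenport

theorem _root_.ENat.sub_one_le_of_forall_lt {a b : ℕ∞}
    (h : ∀ m : ℕ, (m : ℕ∞) < a → (m : ℕ∞) ≤ b) : a - 1 ≤ b := by
  refine tsub_le_iff_right.mpr (ENat.forall_natCast_le_iff_le.mp fun m hm => ?_)
  rcases m with _ | m
  · simp
  · push_cast at hm ⊢
    gcongr
    exact h m (lt_of_lt_of_le (ENat.lt_add_one_iff (ENat.natCast_ne_top m) |>.mpr le_rfl) hm)

section DavenportBounds

variable {K : Type*} [Field K] {G : Type*} [AddCommGroup G] [Finite G]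

theorem davG_sub_one_le_dd : DavG G - 1 ≤ dd K G :=
  ENat.sub_one_le_of_forall_lt fun _ hm =>
    let ⟨w, hw⟩ := exists_zeroSumFree_of_lt_davG hm
    le_dd ((isNonvanishingSeq_iff w).mpr fun a _ => hw.prod_single_sub_ne_zero a)

theorem dd_eq_davG_sub_one {N : ℕ} (hdd : dd K G ≤ N)
    (hD : ((N + 1 : ℕ) : ℕ∞) ≤ DavG G) : dd K G = DavG G - 1 :=
  le_antisymm (hdd.trans (ENat.le_sub_one_of_lt ((ENat.add_one_le_iff (ENat.natCast_ne_top N)).mp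
    (by exact_mod_cast hD)))) davG_sub_one_le_dd

end DavenportBounds

theorem prod_eq_zero_of_mem_span {R ι κ : Type*} [CommRing R] [DecidableEq ι] {v : ι → R}
    {q : ι → ℕ} (hv : ∀ i, v i ^ q i = 0) (s : Finset ι) {t : Finset κ} {F : κ → R}
    (hF : ∀ j ∈ t, F j ∈ Ideal.span (v '' s)) (ht : ∑ i ∈ s, (q i - 1) < t.card) :
    ∏ j ∈ t, F j = 0 := by
  classical
  induction s using Finset.induction_on generalizing t F with
  | empty =>
    obtain ⟨j, hj⟩ := Finset.card_pos.mp (by simpa using ht)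
    exact Finset.prod_eq_zero hj (by simpa using hF j hj)
  | insert a s ha ih =>
    have hdecomp : ∀ j ∈ t, ∃ A c, A ∈ Ideal.span (v '' s) ∧ F j = A + c * v a := by
      intro j hj
      have hFj := hF j hj
      rw [Finset.coe_insert, Set.image_insert_eq, Ideal.span_insert, Submodule.mem_sup] at hFj
      obtain ⟨B, hB, A, hA, hBA⟩ := hFj
      obtain ⟨c, rfl⟩ := Ideal.mem_span_singleton'.mp hB
      exact ⟨A, c, hA, by rw [← hBA, add_comm]⟩
    choose! A c hA hAc using hdecomp
    rw [Finset.prod_congr rfl hAc, Finset.prod_add]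
    refine Finset.sum_eq_zero fun u hu => ?_
    rw [Finset.mem_powerset] at hu
    rw [Finset.sum_insert ha] at ht
    -- either `v a` occurs at least `q a` times, or the `A`-part is long enough for induction
    by_cases hqa : q a ≤ (t \ u).card
    · rw [Finset.prod_mul_distrib, Finset.prod_const, ← Nat.add_sub_cancel' hqa, pow_add, hv,
        zero_mul, mul_zero, mul_zero]
    · have := Finset.card_sdiff_add_card_eq_card hu
      rw [ih (fun j hj => hA j (hu hj)) (by omega), zero_mul]

section CharP

open AddMonoidAlgebra

variable {K : Type*} [Field K] {ι : Type*} [DecidableEq ι] {n : ι → ℕ}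

theorem single_sub_one_mem_span [Fintype ι] [∀ i, NeZero (n i)] (g : ∀ i, ZMod (n i)) :
    (single g 1 - 1 : AddMonoidAlgebra K (∀ i, ZMod (n i))) ∈
      Ideal.span (Set.range fun i => single (Pi.single i 1 : ∀ i, ZMod (n i)) 1 - 1) := by
  set J := Ideal.span (Set.range fun i =>
    (single (Pi.single i 1 : ∀ i, ZMod (n i)) 1 - 1 : AddMonoidAlgebra K (∀ i, ZMod (n i))))
  let M : AddSubmonoid (∀ i, ZMod (n i)) :=
    { carrier := {g | single g 1 - 1 ∈ J}
      zero_mem' := by simp [← one_def]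
      add_mem' := fun {g h} hg hh => by
        have hgh : (single (g + h) 1 - 1 : AddMonoidAlgebra K (∀ i, ZMod (n i))) =
            (single g 1 - 1) * (single h 1 - 1) + (single g 1 - 1) + (single h 1 - 1) := by
          rw [← mul_one (1 : K), ← single_mul_single, mul_one]
          ring
        show _ ∈ J
        rw [hgh]
        exact add_mem (add_mem (J.mul_mem_right _ hg) hg) hh }
  have hg : g ∈ M := by
    rw [← Finset.univ_sum_single g]
    refine AddSubmonoid.sum_mem _ fun i _ => ?_
    rw [← ZMod.natCast_zmod_val (g i), ← nsmul_one, Pi.single_nsmul]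
    exact AddSubmonoid.nsmul_mem _ (show Pi.single i 1 ∈ M from Ideal.subset_span ⟨i, rfl⟩) _
  exact hg

theorem single_single_sub_one_pow_eq_zero {p : ℕ} [Fact p.Prime] [CharP K p] {i : ι} {t : ℕ}
    (hn : n i = p ^ t) :
    (single (Pi.single i 1 : ∀ i, ZMod (n i)) 1 - 1 : AddMonoidAlgebra K (∀ i, ZMod (n i))) ^
      n i = 0 := by
  have :=
    charP_of_injective_ringHom (algebraMap K (AddMonoidAlgebra K (∀ i, ZMod (n i)))).injective p
  have hfrob := sub_pow_char_pow (p := p)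
    (single (Pi.single i 1 : ∀ i, ZMod (n i)) (1 : K)) 1 t
  rw [← hn] at hfrob
  rw [hfrob, one_pow, single_pow, one_pow, ← Pi.single_nsmul, nsmul_one, ZMod.natCast_self,
    Pi.single_zero, ← one_def, sub_self]

theorem dd_le_of_charP [Fintype ι] {p t : ℕ} (hp : p.Prime) [CharP K p]
    (hprod : ∏ i, n i = p ^ t) :
    dd K (∀ i, ZMod (n i)) ≤ ((∑ i, (n i - 1) : ℕ) : ℕ∞) := by
  have := Fact.mk hp
  have hn : ∀ i, ∃ m, n i = p ^ m := fun i =>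
    let ⟨m, _, hm⟩ := (Nat.dvd_prime_pow hp).mp
      (hprod ▸ Finset.dvd_prod_of_mem n (Finset.mem_univ i))
    ⟨m, hm⟩
  have : ∀ i, NeZero (n i) := fun i =>
    ⟨by obtain ⟨m, hm⟩ := hn i; exact hm ▸ (pow_pos hp.pos m).ne'⟩
  refine dd_le fun ℓ s hs => Nat.cast_le.mpr (not_lt.mp fun hlt => ?_)
  refine (isNonvanishingSeq_iff s).mp hs (fun _ => 1) (fun _ => one_ne_zero) ?_
  rw [← one_def]
  refine prod_eq_zero_of_mem_span (fun i => single_single_sub_one_pow_eq_zero (hn i).choose_spec)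
    Finset.univ (fun j _ => ?_) (by simpa using hlt)
  rw [Finset.coe_univ, Set.image_univ]
  exact single_sub_one_mem_span (s j)

end CharP

section Characters

open AddMonoidAlgebra

variable {K : Type*} [Field K] {G : Type*} [AddCommGroup G] [Finite G]
  [HasEnoughRootsOfUnity K (Monoid.exponent (Multiplicative G))]

/-- There are `|G|` characters `G → Kˣ`; being linearly independent they span `G → K`, so the
functional `φ ↦ ∑_g f_g φ(g)` killing all of them is zero. -/
theorem eq_zero_of_forall_lift_eq_zero (f : AddMonoidAlgebra K G)
    (hf : ∀ χ : Multiplicative G →* Kˣ, lift K K G ((Units.coeHom K).comp χ) f = 0) :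
    f = 0 := by
  classical
  have := Fintype.ofFinite G
  have := Fintype.ofFinite (Multiplicative G →* Kˣ)
  let χs : (Multiplicative G →* Kˣ) → Multiplicative G → K := fun χ g => χ g
  have hli : LinearIndependent K χs :=
    (linearIndependent_monoidHom (Multiplicative G) K).comp (fun χ => (Units.coeHom K).comp χ)
      fun χ χ' h => MonoidHom.ext fun g => Units.ext (DFunLike.congr_fun h g)
  have hspan : Submodule.span K (Set.range χs) = ⊤ := by
    refine hli.span_eq_top_of_card_eq_finrank' ?_
    rw [Module.finrank_fintype_fun_eq_card, ← Nat.card_eq_fintype_card,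
      CommGroup.card_monoidHom_of_hasEnoughRootsOfUnity, Nat.card_eq_fintype_card]
  let L : (Multiplicative G → K) →ₗ[K] K :=
    ∑ g : G, f.coeff g • LinearMap.proj (Multiplicative.ofAdd g)
  have hL : L = 0 := LinearMap.ext_on_range hspan fun χ => by
    simpa [L, χs, lift_apply, Finsupp.sum_fintype, mul_comm] using hf χ
  ext g
  simpa [L, Pi.single_apply] using LinearMap.congr_fun hL (Pi.single (Multiplicative.ofAdd g) 1)

theorem dd_le_card_sub_one : dd K G ≤ ((Nat.card G - 1 : ℕ) : ℕ∞) := by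
  classical
  have := Fintype.ofFinite (Multiplicative G →* Kˣ)
  refine dd_le fun ℓ s hs => Nat.cast_le.mpr (not_lt.mp fun hlt => ?_)
  -- each character `χ` is made to kill the factor at its own position `pos χ`
  obtain ⟨pos⟩ : Nonempty ((Multiplicative G →* Kˣ) ↪ Fin ℓ) := by
    refine Function.Embedding.nonempty_of_card_le ?_
    rw [Fintype.card_fin, ← Nat.card_eq_fintype_card,
      CommGroup.card_monoidHom_of_hasEnoughRootsOfUnity]
    have : 0 < Nat.card G := Nat.card_pos
    change Nat.card G ≤ ℓ
    omega
  let a : Fin ℓ → K := Function.extend pos (fun χ => (χ (.ofAdd (s (pos χ))) : K)) 1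
  have ha : ∀ j, a j ≠ 0 := fun j => by
    by_cases hj : ∃ χ, pos χ = j
    · obtain ⟨χ, rfl⟩ := hj
      simp [a, pos.injective.extend_apply]
    · simp [a, Function.extend_apply' _ _ _ hj]
  refine (isNonvanishingSeq_iff s).mp hs a ha (eq_zero_of_forall_lift_eq_zero _ fun χ => ?_)
  rw [map_prod]
  refine Finset.prod_eq_zero (Finset.mem_univ (pos χ)) ?_
  simp [a, pos.injective.extend_apply, lift_single]

end Characters

/-- `d(S,K)` for a direct product of finite cyclic semigroups
`C_{k_1;n_1} × ⋯ × C_{k_r;n_r}`, here indexed by `Fin (r+1)` so that there are `r+1 ≥ 1`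
factors. -/
theorem stmt5 (r : ℕ) (S : Fin (r + 1) → Type*) [∀ i, AddCommSemigroup (S i)]
    (x : ∀ i, S i) (k n : Fin (r + 1) → ℕ)
    (hper : ∀ i, IsPeriodicElem (S i) (x i))
    (hgen : ∀ i, cyc (S i) (x i) = Set.univ)
    (hidx : ∀ i, indexOf (S i) (x i) = k i)
    (hprd : ∀ i, period (S i) (x i) = n i)
    (hmono : ∀ i j : Fin (r + 1), i ≤ j → k i ≤ k j)
    (K : Type*) [Field K]
    (hK : (IsAlgClosed K ∧ CharZero K) ∨
      ∃ p : ℕ, p.Prime ∧ CharP K p ∧ ∃ t : ℕ, (∏ i, n i) = p ^ t) :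
    dd K (∀ i, S i) = max ((k (Fin.last r) : ℕ∞) - 1) (dd K (∀ i, ZMod (n i))) ∧
    dd K (∀ i, S i) ≥ max ((k (Fin.last r) : ℕ∞) - 1) (DavG (∀ i, ZMod (n i)) - 1) ∧
    ((r = 0 ∨ ∃ p : ℕ, p.Prime ∧ CharP K p ∧ ∃ t : ℕ, (∏ i, n i) = p ^ t) →
      dd K (∀ i, S i) = max ((k (Fin.last r) : ℕ∞) - 1) (DavG (∀ i, ZMod (n i)) - 1)) := by
  have : ∀ i, Finite (S i) := fun i => Set.finite_univ_iff.mp (hgen i ▸ hper i)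
  have h : ∀ i, HasIndexPeriod (x i) (k i) (n i) := fun i => by
    rw [← hidx i, ← hprd i]
    exact (hper i).hasIndexPeriod
  have := fun i => (h i).neZero
  have hred := dd_pi_eq_max (K := K) h hgen fun i => hmono i (Fin.last r) (Fin.le_last i)
  refine ⟨hred, hred ▸ max_le_max le_rfl davG_sub_one_le_dd, fun hcase => ?_⟩
  rw [hred, dd_eq_davG_sub_one (N := ∑ i, (n i - 1)) ?_ (sum_sub_one_add_one_le_davG n)]
  have hcharP : (∃ p : ℕ, p.Prime ∧ CharP K p ∧ ∃ t : ℕ, (∏ i, n i) = p ^ t) →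
      dd K (∀ i, ZMod (n i)) ≤ ((∑ i, (n i - 1) : ℕ) : ℕ∞) :=
    fun ⟨_, hp, _, _, ht⟩ => dd_le_of_charP hp ht
  rcases hcase with rfl | hp
  · rcases hK with ⟨_, _⟩ | hp
    · have : NeZero ((Monoid.exponent (Multiplicative (∀ i, ZMod (n i))) : ℕ) : K) :=
        ⟨Nat.cast_ne_zero.mpr Monoid.exponent_ne_zero_of_finite⟩
      simpa using dd_le_card_sub_one (K := K) (G := ∀ i, ZMod (n i))
    · exact hcharP hp
  · exact hcharP hp

end ZS
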